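/- Let g₁, g₂ ∈ ℝ[x₁,…,xₙ] be homogeneous polynomials of the same degree d, each with compact sublevel set. If the Lebesgue moments of orders d and 2d of {x : g₁(x) ≤ 1} and {x : g₂(x) ≤ 1} coincide, then g₁ = g₂ (in particular the two sublevel sets are equal). -/

import Mathlib

/-!
Let `g` be homogeneous of degree `d` with `K = {g ≤ 1}` compact (so `g ≥ 0`). Scaling,
`{g ≤ s} = s ^ (1/d) • K`, together with the layer-cake formula gives, for every homogeneous `p`
of degree `k`, `∫_K p g = (n + k) / (n + k + d) ∫_K p`. For `h = g₁ - g₂` this identity on `K₁`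
and on `K₂`, combined with the equality of the moments of order `d` (for `∫ h`) and `2d`
(for `∫ h g₂`), gives `∫_{K₁} h² = ∫_{K₁} h g₁ - ∫_{K₁} h g₂ = 0`. As `K₁` is a neighbourhood
of `0`, `h` vanishes near `0`, hence everywhere by homogeneity.
-/

open MeasureTheory Filter Topology Set Module Pointwise

def IsPosHomogeneous {E : Type*} [SMul ℝ E] (d : ℕ) (f : E → ℝ) : Prop :=
  ∀ ⦃r : ℝ⦄, 0 < r → ∀ x, f (r • x) = r ^ d * f x

-- Layer cake: `G x = volume (Ioo 0 1 ∩ Iio (G x))`, then Fubini.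
theorem setIntegral_mul_eq_integral_setIntegral_sdiff {X : Type*} [MeasurableSpace X]
    {μ : Measure X} [SFinite μ] {K : Set X} {G P : X → ℝ} (hK : MeasurableSet K)
    (hG : Measurable G) (hG01 : ∀ x ∈ K, G x ∈ Icc 0 1) (hP : IntegrableOn P K μ) :
    ∫ x in K, P x * G x ∂μ = ∫ t in Ioo 0 1, ∫ x in K \ {x | G x ≤ t}, P x ∂μ := by
  set F : X × ℝ → ℝ := {q | q.2 < G q.1}.indicator fun q => P q.1
  have hS : MeasurableSet {q : X × ℝ | q.2 < G q.1} :=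
    measurableSet_lt measurable_snd (hG.comp measurable_fst)
  have hF : Integrable F ((μ.restrict K).prod (volume.restrict (Ioo 0 1))) :=
    (hP.comp_fst _).indicator hS
  have hx : ∀ x ∈ K, ∫ t in Ioo 0 1, F (x, t) = P x * G x := by
    intro x hxK
    change ∫ t in Ioo 0 1, (Iio (G x)).indicator (fun _ => P x) t = P x * G x
    obtain ⟨hG0, hG1⟩ := hG01 x hxK
    rw [setIntegral_indicator measurableSet_Iio, Ioo_inter_Iio, min_eq_right hG1,
      setIntegral_const, Real.volume_real_Ioo_of_le hG0, sub_zero, smul_eq_mul, mul_comm]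
  have ht : ∀ t ∈ Ioo (0 : ℝ) 1,
      ∫ x in K, F (x, t) ∂μ = ∫ x in K \ {x | G x ≤ t}, P x ∂μ := by
    intro t _
    change ∫ x in K, {x | t < G x}.indicator P x ∂μ = _
    rw [setIntegral_indicator (measurableSet_lt measurable_const hG), sdiff_eq, compl_ofPred]
    simp only [not_le]
  rw [← setIntegral_congr_fun hK hx, integral_integral_swap (f := fun x t => F (x, t)) hF]
  exact setIntegral_congr_fun measurableSet_Ioo ht

theorem integral_Ioo_one_sub_rpow {a : ℝ} (ha : -1 < a) :
    ∫ t in Ioo (0 : ℝ) 1, (1 - t ^ a) = a / (a + 1) := by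
  rw [← integral_Ioc_eq_integral_Ioo, ← intervalIntegral.integral_of_le zero_le_one,
    intervalIntegral.integral_sub intervalIntegrable_const
      (intervalIntegral.intervalIntegrable_rpow' ha),
    integral_rpow (Or.inl ha), intervalIntegral.integral_const]
  have ha1 : a + 1 ≠ 0 := by linarith
  rw [Real.one_rpow, Real.zero_rpow ha1]
  field_simp
  ring

theorem eqOn_zero_of_setIntegral_sq_eq_zero {X : Type*} [TopologicalSpace X] [MeasurableSpace X]
    {μ : Measure X} [μ.IsOpenPosMeasure] {f : X → ℝ} {K : Set X}
    (hf : ContinuousOn f (interior K)) (hfK : IntegrableOn (fun x => f x ^ 2) K μ)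
    (h : ∫ x in K, f x ^ 2 ∂μ = 0) : EqOn f 0 (interior K) := by
  have hae : (fun x => f x ^ 2) =ᵐ[μ.restrict K] 0 :=
    (integral_eq_zero_iff_of_nonneg (fun x => sq_nonneg (f x)) hfK).1 h
  intro x hx
  exact pow_eq_zero_iff two_ne_zero |>.1 <| μ.eqOn_open_of_ae_eq
    (ae_restrict_of_ae_restrict_of_subset interior_subset hae) isOpen_interior
    (hf.pow 2) continuousOn_const hx

namespace IsPosHomogeneous

variable {E : Type*} [NormedAddCommGroup E] [NormedSpace ℝ E] {G P : E → ℝ} {d k : ℕ}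

theorem apply_zero (hG : IsPosHomogeneous d G) (hd : d ≠ 0) : G 0 = 0 := by
  have h2 := hG two_pos 0
  rw [smul_zero] at h2
  have h2d : (2 : ℝ) ^ d - 1 ≠ 0 := sub_ne_zero.2 (one_lt_pow₀ one_lt_two hd).ne'
  exact (mul_eq_zero.1 (by linarith : ((2 : ℝ) ^ d - 1) * G 0 = 0)).resolve_left h2d

theorem nonneg (hG : IsPosHomogeneous d G) (hd : d ≠ 0)
    (hK : Bornology.IsBounded {x | G x ≤ 1}) (x : E) : 0 ≤ G x := by
  by_contra! hx
  obtain ⟨R, hR⟩ := hK.exists_norm_le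
  have hray : ∀ t : ℝ, 0 < t → t * ‖x‖ ≤ R := fun t ht => by
    have := hR (t • x) (by rw [mem_ofPred, hG ht]; nlinarith [pow_pos ht d])
    rwa [norm_smul, Real.norm_of_nonneg ht.le] at this
  have hx0 : x = 0 := by
    by_contra hx0
    have hxpos : 0 < ‖x‖ := norm_pos_iff.2 hx0
    have := hray ((|R| + 1) / ‖x‖) (by positivity)
    rw [div_mul_cancel₀ _ hxpos.ne'] at this
    linarith [le_abs_self R]
  rw [hx0, hG.apply_zero hd] at hx
  exact hx.false

theorem smul_sublevel (hG : IsPosHomogeneous d G) {r : ℝ} (hr : 0 < r) :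
    r • {x | G x ≤ 1} = {x | G x ≤ r ^ d} := by
  ext x
  rw [mem_smul_set_iff_inv_smul_mem₀ hr.ne', mem_ofPred, mem_ofPred, hG (inv_pos.2 hr), inv_pow,
    inv_mul_le_iff₀ (pow_pos hr d), mul_one]

theorem sublevel_mem_nhds_zero (hG : IsPosHomogeneous d G) (hd : d ≠ 0) (hGc : Continuous G) :
    {x | G x ≤ 1} ∈ 𝓝 0 :=
  mem_of_superset ((isOpen_lt hGc continuous_const).mem_nhds
    (by rw [mem_ofPred, hG.apply_zero hd]; exact one_pos)) fun x (hx : G x < 1) => hx.le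

variable [FiniteDimensional ℝ E] [MeasurableSpace E] [BorelSpace E] (μ : Measure E)
  [μ.IsAddHaarMeasure]

theorem setIntegral_sublevel_pow (hG : IsPosHomogeneous d G) (hP : IsPosHomogeneous k P)
    {r : ℝ} (hr : 0 < r) :
    ∫ x in {x | G x ≤ r ^ d}, P x ∂μ =
      r ^ (finrank ℝ E + k) * ∫ x in {x | G x ≤ 1}, P x ∂μ := by
  have h := Measure.setIntegral_comp_smul_of_pos μ P {x | G x ≤ 1} hr
  rw [hG.smul_sublevel hr, funext (hP hr), integral_const_mul, smul_eq_mul,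
    eq_inv_mul_iff_mul_eq₀ (pow_ne_zero _ hr.ne')] at h
  rw [← h, pow_add, mul_assoc]

theorem setIntegral_sublevel (hG : IsPosHomogeneous d G) (hP : IsPosHomogeneous k P)
    (hd : d ≠ 0) {s : ℝ} (hs : 0 < s) :
    ∫ x in {x | G x ≤ s}, P x ∂μ =
      s ^ (((finrank ℝ E + k : ℕ) : ℝ) / d) * ∫ x in {x | G x ≤ 1}, P x ∂μ := by
  have hroot : (s ^ (d⁻¹ : ℝ)) ^ d = s := Real.rpow_inv_natCast_pow hs.le hd
  have := hG.setIntegral_sublevel_pow μ hP (Real.rpow_pos_of_pos hs (d⁻¹ : ℝ))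
  rw [hroot, ← Real.rpow_natCast, ← Real.rpow_mul hs.le] at this
  rw [this, div_eq_inv_mul]

theorem setIntegral_sublevel_mul (hG : IsPosHomogeneous d G) (hP : IsPosHomogeneous k P)
    (hd : d ≠ 0) (hGm : Measurable G) (hK : Bornology.IsBounded {x | G x ≤ 1})
    (hPK : IntegrableOn P {x | G x ≤ 1} μ) :
    ∫ x in {x | G x ≤ 1}, P x * G x ∂μ =
      ((finrank ℝ E + k : ℕ) : ℝ) / (finrank ℝ E + k + d : ℕ) *
        ∫ x in {x | G x ≤ 1}, P x ∂μ := by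
  set N := finrank ℝ E + k
  set A := ∫ x in {x | G x ≤ 1}, P x ∂μ
  have hsuper : ∀ t ∈ Ioo (0 : ℝ) 1,
      ∫ x in {x | G x ≤ 1} \ {x | G x ≤ t}, P x ∂μ = (1 - t ^ ((N : ℝ) / d)) * A := by
    intro t ht
    rw [setIntegral_sdiff (measurableSet_le hGm measurable_const) hPK
      fun x (hx : G x ≤ t) => hx.trans ht.2.le, hG.setIntegral_sublevel μ hP hd ht.1]
    ring
  rw [setIntegral_mul_eq_integral_setIntegral_sdiff (measurableSet_le hGm measurable_const) hGm
    (fun x hx => ⟨hG.nonneg hd hK x, hx⟩) hPK, setIntegral_congr_fun measurableSet_Ioo hsuper,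
    integral_mul_const,
    integral_Ioo_one_sub_rpow (by linarith [show (0 : ℝ) ≤ N / d by positivity])]
  have hd' : (d : ℝ) ≠ 0 := Nat.cast_ne_zero.2 hd
  push_cast
  field_simp

end IsPosHomogeneous

namespace MvPolynomial

variable {σ : Type*}

namespace IsHomogeneous

theorem eval_smul {R : Type*} [CommSemiring R] {φ : MvPolynomial σ R} {m : ℕ}
    (hφ : φ.IsHomogeneous m) (r : R) (x : σ → R) :
    eval (r • x) φ = r ^ m * eval x φ := by
  simp only [eval_eq, Finset.mul_sum, Pi.smul_apply, smul_eq_mul, mul_pow,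
    Finset.prod_mul_distrib, Finset.prod_pow_eq_pow_sum]
  refine Finset.sum_congr rfl fun s hs => ?_
  rw [← hφ.degree_eq_sum_deg_support hs]
  ring

theorem eq_zero_of_eventually_eval_eq_zero {R : Type*} [NontriviallyNormedField R]
    {φ : MvPolynomial σ R} {m : ℕ} (hφ : φ.IsHomogeneous m) (h : ∀ᶠ x in 𝓝 0, eval x φ = 0) :
    φ = 0 := by
  refine hφ.eq_zero_of_forall_eval_eq_zero fun x => ?_
  have hsmul : Tendsto (fun t : R => t • x) (𝓝[≠] 0) (𝓝 0) := by
    simpa using (tendsto_id.smul_const x).mono_left (nhdsWithin_le_nhds (a := (0 : R)))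
  obtain ⟨t, ht, ht0⟩ := ((hsmul.eventually h).and self_mem_nhdsWithin).exists
  rw [hφ.eval_smul] at ht
  exact (mul_eq_zero.1 ht).resolve_left (pow_ne_zero _ ht0)

theorem isPosHomogeneous_eval {φ : MvPolynomial σ ℝ} {m : ℕ} (hφ : φ.IsHomogeneous m) :
    IsPosHomogeneous m fun x => eval x φ :=
  fun r _ x => hφ.eval_smul r x

end IsHomogeneous

variable [Fintype σ]

theorem integral_eval_eq_sum {μ : Measure (σ → ℝ)}
    (hμ : ∀ α : σ → ℕ, Integrable (fun x => ∏ i, x i ^ α i) μ) (q : MvPolynomial σ ℝ) :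
    ∫ x, eval x q ∂μ = ∑ s ∈ q.support, coeff s q * ∫ x, ∏ i, x i ^ s i ∂μ := by
  simp_rw [eval_eq', ← integral_const_mul]
  exact integral_finsetSum _ fun s _ => (hμ s).const_mul _

namespace IsHomogeneous

theorem integral_eval_eq_of_moments_eq {μ ν : Measure (σ → ℝ)} {q : MvPolynomial σ ℝ} {m : ℕ}
    (hq : q.IsHomogeneous m)
    (hμ : ∀ α : σ → ℕ, Integrable (fun x => ∏ i, x i ^ α i) μ)
    (hν : ∀ α : σ → ℕ, Integrable (fun x => ∏ i, x i ^ α i) ν)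
    (hmom : ∀ α : σ → ℕ, ∑ i, α i = m →
      ∫ x, ∏ i, x i ^ α i ∂μ = ∫ x, ∏ i, x i ^ α i ∂ν) :
    ∫ x, eval x q ∂μ = ∫ x, eval x q ∂ν := by
  rw [integral_eval_eq_sum hμ, integral_eval_eq_sum hν]
  refine Finset.sum_congr rfl fun s hs => congrArg _ (hmom s ?_)
  rw [← Finsupp.degree_eq_sum, Finsupp.degree_eq_weight_one]
  exact hq (mem_support_iff.1 hs)

theorem setIntegral_sublevel_eval_mul {g p : MvPolynomial σ ℝ} {d k : ℕ}
    (hg : g.IsHomogeneous d) (hp : p.IsHomogeneous k) (hd : d ≠ 0)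
    (hK : IsCompact {x | eval x g ≤ 1}) :
    ∫ x in {x | eval x g ≤ 1}, eval x (p * g) =
      ((Fintype.card σ + k : ℕ) : ℝ) / (Fintype.card σ + k + d : ℕ) *
        ∫ x in {x | eval x g ≤ 1}, eval x p := by
  simp only [map_mul]
  rw [hg.isPosHomogeneous_eval.setIntegral_sublevel_mul volume hp.isPosHomogeneous_eval hd
    (continuous_eval g).measurable hK.isBounded
    ((continuous_eval p).continuousOn.integrableOn_compact hK), finrank_fintype_fun_eq_card]

theorem eq_zero_of_setIntegral_sq_eq_zero {q : MvPolynomial σ ℝ} {m : ℕ} (hq : q.IsHomogeneous m)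
    {K : Set (σ → ℝ)} (hK : IsCompact K) (h0 : K ∈ 𝓝 0) (h : ∫ x in K, eval x q ^ 2 = 0) :
    q = 0 :=
  hq.eq_zero_of_eventually_eval_eq_zero <| mem_of_superset (interior_mem_nhds.2 h0) <|
    eqOn_zero_of_setIntegral_sq_eq_zero (continuous_eval q).continuousOn
      (((continuous_eval q).pow 2).continuousOn.integrableOn_compact hK) h

end IsHomogeneous

end MvPolynomial

theorem eq_of_moments_eq_general (n d : ℕ) (hd : 0 < d)
    (g₁ g₂ : MvPolynomial (Fin n) ℝ)
    (hg₁ : g₁.IsHomogeneous d) (hg₂ : g₂.IsHomogeneous d)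
    (hK₁ : IsCompact {x : Fin n → ℝ | MvPolynomial.eval x g₁ ≤ 1})
    (hK₂ : IsCompact {x : Fin n → ℝ | MvPolynomial.eval x g₂ ≤ 1})
    (hmom : ∀ α : Fin n → ℕ, ((∑ i, α i) = d ∨ (∑ i, α i) = 2 * d) →
      ∫ x in {x : Fin n → ℝ | MvPolynomial.eval x g₁ ≤ 1}, ∏ i, x i ^ α i =
      ∫ x in {x : Fin n → ℝ | MvPolynomial.eval x g₂ ≤ 1}, ∏ i, x i ^ α i) :
    g₁ = g₂ := by
  open MvPolynomial in
  set h := g₁ - g₂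
  have hh : h.IsHomogeneous d := hg₁.sub hg₂
  have hint (p : MvPolynomial (Fin n) ℝ) : IntegrableOn (fun x => eval x p) {x | eval x g₁ ≤ 1} :=
    (continuous_eval p).continuousOn.integrableOn_compact hK₁
  have hmonomial {K : Set (Fin n → ℝ)} (hK : IsCompact K) (α : Fin n → ℕ) :
      IntegrableOn (fun x => ∏ i, x i ^ α i) K :=
    (continuous_finsetProd _ fun i _ => (continuous_apply i).pow (α i)).continuousOn
      |>.integrableOn_compact hK
  have htransfer {q : MvPolynomial (Fin n) ℝ} {m : ℕ} (hq : q.IsHomogeneous m)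
      (hm : m = d ∨ m = 2 * d) :
      ∫ x in {x | eval x g₁ ≤ 1}, eval x q = ∫ x in {x | eval x g₂ ≤ 1}, eval x q :=
    hq.integral_eval_eq_of_moments_eq (hmonomial hK₁) (hmonomial hK₂) fun α hα => hmom α (hα ▸ hm)
  have hsq : ∫ x in {x | eval x g₁ ≤ 1}, eval x h ^ 2 = 0 := by
    have hsplit : ∀ x, eval x h ^ 2 = eval x (h * g₁) - eval x (h * g₂) := fun x => by
      simp only [h, map_mul, map_sub]; ring
    rw [integral_congr_ae (ae_of_all _ hsplit), integral_sub (hint _) (hint _),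
      hg₁.setIntegral_sublevel_eval_mul hh hd.ne' hK₁,
      htransfer (hh.mul hg₂) (Or.inr (two_mul d).symm),
      hg₂.setIntegral_sublevel_eval_mul hh hd.ne' hK₂, htransfer hh (Or.inl rfl), sub_self]
  have h0 : {x : Fin n → ℝ | eval x g₁ ≤ 1} ∈ 𝓝 0 :=
    hg₁.isPosHomogeneous_eval.sublevel_mem_nhds_zero hd.ne' (continuous_eval g₁)
  exact sub_eq_zero.1 (hh.eq_zero_of_setIntegral_sq_eq_zero hK₁ h0 hsq)

/-- Uniqueness: two homogeneous polynomials of the same degree `d` with compact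
sublevel sets whose Lebesgue moments of orders `d` and `2d` coincide must be equal. -/
theorem eq_of_moments_eq (n d : ℕ) (hn : 0 < n) (hd : 0 < d)
    (g₁ g₂ : MvPolynomial (Fin n) ℝ)
    (hg₁ : g₁.IsHomogeneous d) (hg₂ : g₂.IsHomogeneous d)
    (hK₁ : IsCompact {x : Fin n → ℝ | MvPolynomial.eval x g₁ ≤ 1})
    (hK₂ : IsCompact {x : Fin n → ℝ | MvPolynomial.eval x g₂ ≤ 1})
    (hmom : ∀ α : Fin n → ℕ, ((∑ i, α i) = d ∨ (∑ i, α i) = 2 * d) →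
      ∫ x in {x : Fin n → ℝ | MvPolynomial.eval x g₁ ≤ 1}, ∏ i, x i ^ α i =
      ∫ x in {x : Fin n → ℝ | MvPolynomial.eval x g₂ ≤ 1}, ∏ i, x i ^ α i) :
    g₁ = g₂ :=
  eq_of_moments_eq_general n d hd g₁ g₂ hg₁ hg₂ hK₁ hK₂ hmom
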